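/- Let H₁ and H₂ be real Hilbert spaces, K : H₁ → H₂ a continuous linear operator, f ∈ H₂ nonzero, C_f > 0, C₃ > 0 and θ ∈ (0, 1/2). Let (γ_k, v_k, β_k, p_k)_{k≥1} be a non-terminating Golub–Kahan bidiagonalization (GKB) process for (K, f), and assume min(γ_k, β_k) ≥ C₃·k^{−θ} for all k ≥ 1. Then there exists a constant C₄ > 0 such that for every δ > 0, every f^δ ∈ H₂ with ‖f^δ − f‖ ≤ C_f·δ, every non-terminating GKB process (γ_k^δ, v_k^δ, β_k^δ, p_k^δ)_{k≥1} for (K, f^δ), and every k ≥ 1: |γ_k^δ − γ_k| + ‖v_k^δ − v_k‖ + |β_k^δ − β_k| + ‖p_k^δ − p_k‖ ≤ C₄·k!·δ. -/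

import Mathlib

/-!
Let `e k = |γδ k - γ k| + ‖vδ k - v k‖ + |βδ k - β k| + ‖pδ k - p k‖`. Every half-step of the
GKB process normalises a vector `T x - b • u`. Normalising a vector of norm `a` is
`(1 + 2 / a)`-Lipschitz, and `T x - b • u` is `R`-Lipschitz in `(x, b, u)` with `R = ‖K‖ + 1`,
because the coefficients are the inner products `β k = ⟪v k, K (p k)⟫` and
`γ (k + 1) = ⟪K (p k), v (k + 1)⟫` and so are bounded by `‖K‖`. Hence
`e (k + 1) ≤ ρ (k + 1) * e k` with `ρ k = ((1 + 2 / min (γ k) (β k)) * R + 1) ^ 2`, and the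
lower bound on `γ, β` gives `ρ k = O(k ^ (2 * θ))`. As `2 * θ < 1`, eventually `ρ k ≤ k + 1`,
so `∏ j ≤ k, ρ j = O((k + 1)!)`.
-/

open ContinuousLinearMap

/-- A non-terminating Golub–Kahan bidiagonalization (GKB) process for `(K, g)`.
Index `j : ℕ` corresponds to the `(j+1)`-st element of the process in the paper
(i.e. `γ 0 = γ₁`, `v 0 = v₁`, etc.). All coefficients are strictly positive. -/
structure GKB {H₁ H₂ : Type*}
    [NormedAddCommGroup H₁] [InnerProductSpace ℝ H₁] [CompleteSpace H₁]
    [NormedAddCommGroup H₂] [InnerProductSpace ℝ H₂] [CompleteSpace H₂]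
    (K : H₁ →L[ℝ] H₂) (g : H₂)
    (γ β : ℕ → ℝ) (v : ℕ → H₂) (p : ℕ → H₁) : Prop where
  γ_pos : ∀ j, 0 < γ j
  β_pos : ∀ j, 0 < β j
  γ_zero : γ 0 = ‖g‖
  v_zero : γ 0 • v 0 = g
  β_zero : β 0 = ‖adjoint K (v 0)‖
  p_zero : β 0 • p 0 = adjoint K (v 0)
  γ_succ : ∀ j, γ (j + 1) = ‖K (p j) - β j • v j‖
  v_succ : ∀ j, γ (j + 1) • v (j + 1) = K (p j) - β j • v j
  β_succ : ∀ j, β (j + 1) = ‖adjoint K (v (j + 1)) - γ (j + 1) • p j‖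
  p_succ : ∀ j, β (j + 1) • p (j + 1) = adjoint K (v (j + 1)) - γ (j + 1) • p j

open Filter Topology RealInnerProductSpace

lemma tendsto_sq_add_mul_rpow_div_atTop (a b : ℝ) {θ : ℝ} (hθ : θ < 1 / 2) :
    Tendsto (fun x : ℝ => (a + b * x ^ θ) ^ 2 / x) atTop (𝓝 0) := by
  have hlim : Tendsto (fun x : ℝ => (a * x ^ (-(1 / 2) : ℝ) + b * x ^ (-(1 / 2 - θ))) ^ 2)
      atTop (𝓝 ((a * 0 + b * 0) ^ 2)) :=
    (((tendsto_rpow_neg_atTop (by norm_num)).const_mul a).add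
      ((tendsto_rpow_neg_atTop (by linarith)).const_mul b)).pow 2
  rw [mul_zero, mul_zero, add_zero, sq, zero_mul] at hlim
  refine hlim.congr' ?_
  filter_upwards [eventually_gt_atTop 0] with x hx
  have hsqrt : (x ^ (-(1 / 2) : ℝ)) ^ 2 = x⁻¹ := by
    rw [← Real.rpow_natCast, ← Real.rpow_mul hx.le]; norm_num [Real.rpow_neg_one]
  have hsplit : x ^ (-(1 / 2 - θ)) = x ^ θ * x ^ (-(1 / 2) : ℝ) := by
    rw [← Real.rpow_add hx]; ring_nf
  rw [hsplit, div_eq_mul_inv _ x, ← hsqrt]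
  ring

lemma eventually_sq_add_mul_rpow_le_self (a b : ℝ) {θ : ℝ} (hθ : θ < 1 / 2) :
    ∀ᶠ x : ℝ in atTop, (a + b * x ^ θ) ^ 2 ≤ x := by
  filter_upwards [(tendsto_sq_add_mul_rpow_div_atTop a b hθ).eventually (gt_mem_nhds one_pos),
    eventually_gt_atTop 0] with x hlt hx
  exact (div_le_one hx).1 hlt.le

open Finset Nat in
lemma exists_prod_range_le_mul_factorial {c : ℕ → ℝ} (hc : ∀ j, 0 ≤ c j)
    (hle : ∀ᶠ j in atTop, c j ≤ j + 1) : ∃ C > 0, ∀ n, ∏ j ∈ range n, c j ≤ C * n ! := by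
  obtain ⟨N, hN⟩ := eventually_atTop.1 hle
  set C := ∏ j ∈ range N, max (c j) 1
  have hC : 1 ≤ C := one_le_prod fun j _ => le_max_right _ _
  have hsmall : ∀ n ≤ N, ∏ j ∈ range n, c j ≤ C * n ! := fun n hn =>
    calc ∏ j ∈ range n, c j ≤ ∏ j ∈ range n, max (c j) 1 :=
          prod_le_prod (fun j _ => hc j) fun j _ => le_max_left _ _
      _ ≤ C := prod_le_prod_of_subset_of_one_le (range_subset_range.2 hn)
          (fun j _ => by positivity) fun j _ _ => le_max_right _ _
      _ ≤ C * n ! := le_mul_of_one_le_right (by positivity) (mod_cast n.factorial_pos)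
  refine ⟨C, by positivity, fun n => ?_⟩
  rcases le_total n N with hn | hn
  · exact hsmall n hn
  · induction n, hn using Nat.le_induction with
    | base => exact hsmall N le_rfl
    | succ n hn ih =>
      calc ∏ j ∈ range (n + 1), c j = (∏ j ∈ range n, c j) * c n := prod_range_succ _ _
        _ ≤ C * n ! * (n + 1) := mul_le_mul ih (hN n hn) (hc n) (by positivity)
        _ = C * (n + 1)! := by push_cast [factorial_succ]; ring

section NormedSpace

variable {E F : Type*} [NormedAddCommGroup E] [NormedSpace ℝ E]
  [NormedAddCommGroup F] [NormedSpace ℝ F]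

lemma norm_eq_one_of_smul_eq {a : ℝ} {u g : E} (ha : 0 < a) (hag : a = ‖g‖) (hu : a • u = g) :
    ‖u‖ = 1 := by
  have h := congrArg norm hu
  rw [norm_smul, Real.norm_of_nonneg ha.le, ← hag] at h
  exact (mul_eq_left₀ ha.ne').1 h

lemma abs_sub_add_norm_sub_le_of_smul_eq {a a' : ℝ} {g g' u u' : E} (ha : 0 < a)
    (hag : a = ‖g‖) (hag' : a' = ‖g'‖) (hu : a • u = g) (hu' : a' • u' = g') (hu'1 : ‖u'‖ = 1) :
    |a' - a| + ‖u' - u‖ ≤ (1 + 2 / a) * ‖g' - g‖ := by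
  have hnorm : |a' - a| ≤ ‖g' - g‖ := hag ▸ hag' ▸ abs_norm_sub_norm_le g' g
  have hsmul : a • (u' - u) = (a - a') • u' + (g' - g) := by
    rw [smul_sub, hu, sub_smul, hu']; abel
  have hdir : a * ‖u' - u‖ ≤ 2 * ‖g' - g‖ :=
    calc a * ‖u' - u‖ = ‖(a - a') • u' + (g' - g)‖ := by
          rw [← hsmul, norm_smul, Real.norm_of_nonneg ha.le]
      _ ≤ |a' - a| + ‖g' - g‖ := by
          grw [norm_add_le, norm_smul, hu'1, Real.norm_eq_abs, abs_sub_comm, mul_one]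
      _ ≤ 2 * ‖g' - g‖ := by linarith
  have : ‖u' - u‖ ≤ 2 / a * ‖g' - g‖ := by
    rw [div_mul_eq_mul_div, le_div_iff₀ ha, mul_comm]; exact hdir
  linarith

lemma norm_apply_sub_smul_sub_le {T : E →L[ℝ] F} {x x' : E} {b b' R : ℝ} {u u' : F}
    (hT : ‖T‖ ≤ R) (hb : |b| ≤ R) (hR : 1 ≤ R) (hu' : ‖u'‖ = 1) :
    ‖(T x' - b' • u') - (T x - b • u)‖ ≤ R * (‖x' - x‖ + |b' - b| + ‖u' - u‖) := by
  have hsplit : (T x' - b' • u') - (T x - b • u) = T (x' - x) - ((b' - b) • u' + b • (u' - u)) := by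
    rw [map_sub, sub_smul, smul_sub]; abel
  rw [hsplit]
  calc _ ≤ ‖T (x' - x)‖ + (‖(b' - b) • u'‖ + ‖b • (u' - u)‖) := by
        grw [norm_sub_le, norm_add_le]
    _ ≤ ‖T‖ * ‖x' - x‖ + (|b' - b| + |b| * ‖u' - u‖) := by
        rw [norm_smul, norm_smul, hu', mul_one, Real.norm_eq_abs, Real.norm_eq_abs]
        grw [T.le_opNorm]
    _ ≤ R * ‖x' - x‖ + (R * |b' - b| + R * ‖u' - u‖) := by
        gcongr
        exact le_mul_of_one_le_left (abs_nonneg _) hR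
    _ = _ := by ring

end NormedSpace

lemma inner_eq_of_smul_eq_sub {E : Type*} [NormedAddCommGroup E] [InnerProductSpace ℝ E]
    {y u w : E} {b c : ℝ} (hc : 0 < c) (hw : c • w = y - b • u) (hu : ‖u‖ = 1) (hw1 : ‖w‖ = 1)
    (hyu : ⟪y, u⟫ = b) : ⟪y, w⟫ = c := by
  have horth : ⟪u, w⟫ = 0 := by
    have : c * ⟪u, w⟫ = 0 := by
      rw [← real_inner_smul_right, hw, inner_sub_right, real_inner_smul_right,
        real_inner_self_eq_norm_sq, hu, real_inner_comm, hyu]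
      ring
    exact (mul_eq_zero.1 this).resolve_left hc.ne'
  have hy : y = c • w + b • u := by rw [hw]; abel
  rw [hy, inner_add_left, real_inner_smul_left, real_inner_smul_left, real_inner_self_eq_norm_sq,
    hw1, horth]
  ring

lemma add_le_sq_mul_of_le {a b x e : ℝ} (hx : 0 ≤ x) (he : 0 ≤ e) (ha : a ≤ x * e)
    (hb : b ≤ x * (a + e)) : a + b ≤ (x + 1) ^ 2 * e := by
  nlinarith [mul_le_mul_of_nonneg_left ha hx]

lemma real_inner_apply_le_opNorm {E F : Type*} [NormedAddCommGroup E] [InnerProductSpace ℝ E]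
    [NormedAddCommGroup F] [InnerProductSpace ℝ F] (T : E →L[ℝ] F) {x : E} {y : F}
    (hx : ‖x‖ = 1) (hy : ‖y‖ = 1) : ⟪y, T x⟫ ≤ ‖T‖ :=
  calc ⟪y, T x⟫ ≤ ‖y‖ * ‖T x‖ := real_inner_le_norm _ _
    _ ≤ ‖T‖ := by simpa [hx, hy] using T.le_opNorm x

section GKBStability

variable {H₁ H₂ : Type*}
  [NormedAddCommGroup H₁] [InnerProductSpace ℝ H₁] [NormedAddCommGroup H₂] [InnerProductSpace ℝ H₂]
  {K : H₁ →L[ℝ] H₂} {g g' : H₂} {γ β γ' β' : ℕ → ℝ} {v v' : ℕ → H₂} {p p' : ℕ → H₁}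

noncomputable def gkbDist (γ β : ℕ → ℝ) (v : ℕ → H₂) (p : ℕ → H₁) (γ' β' : ℕ → ℝ) (v' : ℕ → H₂)
    (p' : ℕ → H₁) (k : ℕ) : ℝ :=
  |γ' k - γ k| + ‖v' k - v k‖ + |β' k - β k| + ‖p' k - p k‖

/-- With `x = (1 + 2 / min (γ k) (β k)) * (‖K‖ + 1)` bounding each half-step of step `k`,
the square `(x + 1) ^ 2 ≥ x + x * (x + 1)` accounts for both (`add_le_sq_mul_of_le`). -/
noncomputable def gkbFactor (K : H₁ →L[ℝ] H₂) (γ β : ℕ → ℝ) (k : ℕ) : ℝ :=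
  ((1 + 2 / min (γ k) (β k)) * (‖K‖ + 1) + 1) ^ 2

lemma gkbFactor_le {C₃ θ x : ℝ} {k : ℕ} (hC₃ : 0 < C₃) (hx : 0 < x)
    (hk : C₃ * x ^ (-θ) ≤ min (γ k) (β k)) :
    gkbFactor K γ β k ≤ (‖K‖ + 2 + 2 * (‖K‖ + 1) / C₃ * x ^ θ) ^ 2 := by
  have hmin : 0 < min (γ k) (β k) := lt_of_lt_of_le (by positivity) hk
  have hinv : 2 / min (γ k) (β k) ≤ 2 / C₃ * x ^ θ := by
    rw [Real.rpow_neg hx.le] at hk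
    calc 2 / min (γ k) (β k) ≤ 2 / (C₃ * (x ^ θ)⁻¹) := by gcongr
      _ = 2 / C₃ * x ^ θ := by field_simp
  have hbase : 0 ≤ (1 + 2 / min (γ k) (β k)) * (‖K‖ + 1) + 1 :=
    add_nonneg (mul_nonneg (add_nonneg zero_le_one (div_nonneg zero_le_two hmin.le))
      (by positivity)) zero_le_one
  refine pow_le_pow_left₀ hbase ?_ 2
  calc (1 + 2 / min (γ k) (β k)) * (‖K‖ + 1) + 1
      ≤ (1 + 2 / C₃ * x ^ θ) * (‖K‖ + 1) + 1 := by gcongr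
    _ = ‖K‖ + 2 + 2 * (‖K‖ + 1) / C₃ * x ^ θ := by ring

lemma eventually_gkbFactor_le_succ {C₃ θ : ℝ} (hC₃ : 0 < C₃) (hθ : θ < 1 / 2)
    (hlow : ∀ k : ℕ, C₃ * ((k : ℝ) + 1) ^ (-θ) ≤ min (γ k) (β k)) :
    ∀ᶠ k : ℕ in atTop, gkbFactor K γ β k ≤ k + 1 := by
  have hx : Tendsto (fun k : ℕ => (k : ℝ) + 1) atTop atTop :=
    tendsto_atTop_add_const_right _ 1 tendsto_natCast_atTop_atTop
  filter_upwards [hx.eventually (eventually_sq_add_mul_rpow_le_self _ _ hθ)] with k hk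
  exact (gkbFactor_le hC₃ (by positivity) (hlow k)).trans hk

namespace GKB

variable [CompleteSpace H₁] [CompleteSpace H₂]

lemma norm_v (hG : GKB K g γ β v p) (j : ℕ) : ‖v j‖ = 1 := by
  cases j with
  | zero => exact norm_eq_one_of_smul_eq (hG.γ_pos 0) hG.γ_zero hG.v_zero
  | succ j => exact norm_eq_one_of_smul_eq (hG.γ_pos _) (hG.γ_succ j) (hG.v_succ j)

lemma norm_p (hG : GKB K g γ β v p) (j : ℕ) : ‖p j‖ = 1 := by
  cases j with
  | zero => exact norm_eq_one_of_smul_eq (hG.β_pos 0) hG.β_zero hG.p_zero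
  | succ j => exact norm_eq_one_of_smul_eq (hG.β_pos _) (hG.β_succ j) (hG.p_succ j)

lemma min_pos (hG : GKB K g γ β v p) (k : ℕ) : 0 < min (γ k) (β k) :=
  lt_min (hG.γ_pos k) (hG.β_pos k)

lemma one_add_two_div_γ_le (hG : GKB K g γ β v p) (k : ℕ) :
    1 + 2 / γ k ≤ 1 + 2 / min (γ k) (β k) := by
  gcongr
  exacts [hG.min_pos k, min_le_left _ _]

lemma one_add_two_div_β_le (hG : GKB K g γ β v p) (k : ℕ) :
    1 + 2 / β k ≤ 1 + 2 / min (γ k) (β k) := by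
  gcongr
  exacts [hG.min_pos k, min_le_right _ _]

lemma inner_apply_p_v_succ_of_inner_v_apply_p (hG : GKB K g γ β v p) {k : ℕ}
    (h : ⟪v k, K (p k)⟫ = β k) :
    ⟪K (p k), v (k + 1)⟫ = γ (k + 1) :=
  inner_eq_of_smul_eq_sub (hG.γ_pos _) (hG.v_succ k) (hG.norm_v k) (hG.norm_v _)
    (by rwa [real_inner_comm])

lemma inner_v_apply_p (hG : GKB K g γ β v p) (k : ℕ) : ⟪v k, K (p k)⟫ = β k := by
  induction k with
  | zero =>
    rw [← adjoint_inner_left, ← hG.p_zero, real_inner_smul_left, real_inner_self_eq_norm_sq,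
      hG.norm_p, one_pow, mul_one]
  | succ k ih =>
    rw [← adjoint_inner_left]
    refine inner_eq_of_smul_eq_sub (hG.β_pos _) (hG.p_succ k) (hG.norm_p k) (hG.norm_p _) ?_
    rw [adjoint_inner_left, real_inner_comm]
    exact hG.inner_apply_p_v_succ_of_inner_v_apply_p ih

lemma β_le_norm (hG : GKB K g γ β v p) (k : ℕ) : β k ≤ ‖K‖ :=
  hG.inner_v_apply_p k ▸ real_inner_apply_le_opNorm K (hG.norm_p k) (hG.norm_v k)

lemma γ_succ_le_norm (hG : GKB K g γ β v p) (k : ℕ) : γ (k + 1) ≤ ‖K‖ := by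
  rw [← hG.inner_apply_p_v_succ_of_inner_v_apply_p (hG.inner_v_apply_p k), real_inner_comm]
  exact real_inner_apply_le_opNorm K (hG.norm_p k) (hG.norm_v _)

lemma gkbDist_zero_le (hG : GKB K g γ β v p) (hG' : GKB K g' γ' β' v' p') :
    gkbDist γ β v p γ' β' v' p' 0 ≤ gkbFactor K γ β 0 * ‖g' - g‖ := by
  set c := 1 + 2 / min (γ 0) (β 0)
  set R := ‖K‖ + 1
  have hc : 0 ≤ c := add_nonneg zero_le_one (div_nonneg zero_le_two (hG.min_pos 0).le)
  have hR : 1 ≤ R := le_add_of_nonneg_left (norm_nonneg K)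
  have hcR : c ≤ c * R := le_mul_of_one_le_right hc hR
  set a := |γ' 0 - γ 0| + ‖v' 0 - v 0‖
  have ha : a ≤ c * R * ‖g' - g‖ := by
    calc a ≤ (1 + 2 / γ 0) * ‖g' - g‖ :=
          abs_sub_add_norm_sub_le_of_smul_eq (hG.γ_pos 0) hG.γ_zero hG'.γ_zero hG.v_zero
            hG'.v_zero (hG'.norm_v 0)
      _ ≤ c * R * ‖g' - g‖ :=
          mul_le_mul_of_nonneg_right ((hG.one_add_two_div_γ_le 0).trans hcR) (norm_nonneg _)
  have hb : |β' 0 - β 0| + ‖p' 0 - p 0‖ ≤ c * R * (a + ‖g' - g‖) := by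
    have hv : ‖v' 0 - v 0‖ ≤ a := le_add_of_nonneg_left (abs_nonneg _)
    calc |β' 0 - β 0| + ‖p' 0 - p 0‖ ≤ (1 + 2 / β 0) * ‖adjoint K (v' 0) - adjoint K (v 0)‖ :=
          abs_sub_add_norm_sub_le_of_smul_eq (hG.β_pos 0) hG.β_zero hG'.β_zero hG.p_zero
            hG'.p_zero (hG'.norm_p 0)
      _ ≤ c * (R * a) := by
          refine mul_le_mul (hG.one_add_two_div_β_le 0) ?_ (norm_nonneg _) hc
          calc ‖adjoint K (v' 0) - adjoint K (v 0)‖ ≤ ‖adjoint K‖ * ‖v' 0 - v 0‖ := by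
                rw [← map_sub]; exact le_opNorm _ _
            _ ≤ R * a := by
                rw [adjoint.norm_map]
                exact mul_le_mul (le_add_of_nonneg_right zero_le_one) hv (norm_nonneg _)
                  (by positivity)
      _ ≤ c * R * (a + ‖g' - g‖) := by
          rw [← mul_assoc]; gcongr; exact le_add_of_nonneg_right (norm_nonneg _)
  calc gkbDist γ β v p γ' β' v' p' 0 = a + (|β' 0 - β 0| + ‖p' 0 - p 0‖) := add_assoc _ _ _
    _ ≤ gkbFactor K γ β 0 * ‖g' - g‖ :=
      add_le_sq_mul_of_le (by positivity) (norm_nonneg _) ha hb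

lemma gkbDist_succ_le (hG : GKB K g γ β v p) (hG' : GKB K g' γ' β' v' p') (k : ℕ) :
    gkbDist γ β v p γ' β' v' p' (k + 1) ≤
      gkbFactor K γ β (k + 1) * gkbDist γ β v p γ' β' v' p' k := by
  set c := 1 + 2 / min (γ (k + 1)) (β (k + 1))
  set R := ‖K‖ + 1
  set e := gkbDist γ β v p γ' β' v' p' k
  have hc : 0 ≤ c := add_nonneg zero_le_one (div_nonneg zero_le_two (hG.min_pos _).le)
  have hR : 1 ≤ R := le_add_of_nonneg_left (norm_nonneg K)
  have hKR : ‖K‖ ≤ R := le_add_of_nonneg_right zero_le_one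
  have he : 0 ≤ e := by unfold e gkbDist; positivity
  set a := |γ' (k + 1) - γ (k + 1)| + ‖v' (k + 1) - v (k + 1)‖
  have ha : a ≤ c * R * e := by
    have hstep := norm_apply_sub_smul_sub_le (x := p k) (x' := p' k) (b' := β' k) (u := v k)
      hKR ((abs_of_pos (hG.β_pos k)).trans_le ((hG.β_le_norm k).trans hKR)) hR (hG'.norm_v k)
    calc a ≤ (1 + 2 / γ (k + 1)) * ‖(K (p' k) - β' k • v' k) - (K (p k) - β k • v k)‖ :=
          abs_sub_add_norm_sub_le_of_smul_eq (hG.γ_pos _) (hG.γ_succ k) (hG'.γ_succ k)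
            (hG.v_succ k) (hG'.v_succ k) (hG'.norm_v _)
      _ ≤ c * (R * (‖p' k - p k‖ + |β' k - β k| + ‖v' k - v k‖)) :=
          mul_le_mul (hG.one_add_two_div_γ_le _) hstep (norm_nonneg _) hc
      _ ≤ c * R * e := by
          rw [← mul_assoc]
          refine mul_le_mul_of_nonneg_left ?_ (by positivity)
          unfold e gkbDist
          linarith [abs_nonneg (γ' k - γ k)]
  have hb : |β' (k + 1) - β (k + 1)| + ‖p' (k + 1) - p (k + 1)‖ ≤ c * R * (a + e) := by
    have hstep := norm_apply_sub_smul_sub_le (x := v (k + 1)) (x' := v' (k + 1))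
      (b' := γ' (k + 1)) (u := p k) ((adjoint.norm_map K).trans_le hKR)
      ((abs_of_pos (hG.γ_pos _)).trans_le ((hG.γ_succ_le_norm k).trans hKR)) hR (hG'.norm_p k)
    calc |β' (k + 1) - β (k + 1)| + ‖p' (k + 1) - p (k + 1)‖
        ≤ (1 + 2 / β (k + 1)) * ‖(adjoint K (v' (k + 1)) - γ' (k + 1) • p' k) -
            (adjoint K (v (k + 1)) - γ (k + 1) • p k)‖ :=
          abs_sub_add_norm_sub_le_of_smul_eq (hG.β_pos _) (hG.β_succ k) (hG'.β_succ k)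
            (hG.p_succ k) (hG'.p_succ k) (hG'.norm_p _)
      _ ≤ c * (R * (‖v' (k + 1) - v (k + 1)‖ + |γ' (k + 1) - γ (k + 1)| + ‖p' k - p k‖)) :=
          mul_le_mul (hG.one_add_two_div_β_le _) hstep (norm_nonneg _) hc
      _ ≤ c * R * (a + e) := by
          rw [← mul_assoc]
          refine mul_le_mul_of_nonneg_left ?_ (by positivity)
          unfold a e gkbDist
          linarith [abs_nonneg (γ' k - γ k), abs_nonneg (β' k - β k), norm_nonneg (v' k - v k)]
  calc gkbDist γ β v p γ' β' v' p' (k + 1)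
      = a + (|β' (k + 1) - β (k + 1)| + ‖p' (k + 1) - p (k + 1)‖) := add_assoc _ _ _
    _ ≤ gkbFactor K γ β (k + 1) * e := add_le_sq_mul_of_le (by positivity) he ha hb

lemma gkbDist_le_prod (hG : GKB K g γ β v p) (hG' : GKB K g' γ' β' v' p') (k : ℕ) :
    gkbDist γ β v p γ' β' v' p' k ≤ (∏ j ∈ Finset.range (k + 1), gkbFactor K γ β j) * ‖g' - g‖ := by
  induction k with
  | zero => simpa using gkbDist_zero_le hG hG'
  | succ k ih =>
    calc gkbDist γ β v p γ' β' v' p' (k + 1)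
        ≤ gkbFactor K γ β (k + 1) * gkbDist γ β v p γ' β' v' p' k := gkbDist_succ_le hG hG' k
      _ ≤ gkbFactor K γ β (k + 1) * ((∏ j ∈ Finset.range (k + 1), gkbFactor K γ β j) * ‖g' - g‖) :=
          mul_le_mul_of_nonneg_left ih (sq_nonneg _)
      _ = _ := by rw [Finset.prod_range_succ _ (k + 1)]; ring

end GKB

end GKBStability

theorem stmt_14_general
    {H₁ H₂ : Type*}
    [NormedAddCommGroup H₁] [InnerProductSpace ℝ H₁] [CompleteSpace H₁]
    [NormedAddCommGroup H₂] [InnerProductSpace ℝ H₂] [CompleteSpace H₂]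
    (K : H₁ →L[ℝ] H₂) (f : H₂)
    (C_f C₃ θ : ℝ) (hCf : 0 < C_f) (hC₃ : 0 < C₃) (hθ : θ < 1 / 2)
    (γ β : ℕ → ℝ) (v : ℕ → H₂) (p : ℕ → H₁)
    (hGKB : GKB K f γ β v p)
    (hlow : ∀ k : ℕ, C₃ * ((k : ℝ) + 1) ^ (-θ) ≤ min (γ k) (β k)) :
    ∃ C₄ : ℝ, 0 < C₄ ∧
      ∀ δ : ℝ, 0 < δ → ∀ fδ : H₂, ‖fδ - f‖ ≤ C_f * δ →
        ∀ (γδ βδ : ℕ → ℝ) (vδ : ℕ → H₂) (pδ : ℕ → H₁),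
          GKB K fδ γδ βδ vδ pδ →
          ∀ k : ℕ,
            |γδ k - γ k| + ‖vδ k - v k‖ + |βδ k - β k| + ‖pδ k - p k‖ ≤
              C₄ * (Nat.factorial (k + 1)) * δ := by
  obtain ⟨C, hC, hprod⟩ := exists_prod_range_le_mul_factorial (fun _ => sq_nonneg _)
    (eventually_gkbFactor_le_succ (K := K) hC₃ hθ hlow)
  refine ⟨C * C_f, by positivity, fun δ hδ fδ hfδ γδ βδ vδ pδ hGδ k => ?_⟩
  calc gkbDist γ β v p γδ βδ vδ pδ k
      ≤ (∏ j ∈ Finset.range (k + 1), gkbFactor K γ β j) * ‖fδ - f‖ := hGKB.gkbDist_le_prod hGδ k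
    _ ≤ C * (k + 1).factorial * (C_f * δ) :=
        mul_le_mul (hprod _) hfδ (norm_nonneg _) (by positivity)
    _ = C * C_f * (k + 1).factorial * δ := by ring

/-- stability of the GKB process under perturbation of the data. With
`0`-based indexing, index `k : ℕ` corresponds to the paper's step `k+1`, so the lower
bound reads `min (γ k) (β k) ≥ C₃·(k+1)^{−θ}` and the conclusion involves `(k+1)!`. -/
theorem stmt_14
    {H₁ H₂ : Type*}
    [NormedAddCommGroup H₁] [InnerProductSpace ℝ H₁] [CompleteSpace H₁]
    [NormedAddCommGroup H₂] [InnerProductSpace ℝ H₂] [CompleteSpace H₂]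
    (K : H₁ →L[ℝ] H₂) (f : H₂) (hf : f ≠ 0)
    (C_f C₃ θ : ℝ) (hCf : 0 < C_f) (hC₃ : 0 < C₃) (hθ0 : 0 < θ) (hθ : θ < 1 / 2)
    (γ β : ℕ → ℝ) (v : ℕ → H₂) (p : ℕ → H₁)
    (hGKB : GKB K f γ β v p)
    (hlow : ∀ k : ℕ, C₃ * ((k : ℝ) + 1) ^ (-θ) ≤ min (γ k) (β k)) :
    ∃ C₄ : ℝ, 0 < C₄ ∧
      ∀ δ : ℝ, 0 < δ → ∀ fδ : H₂, ‖fδ - f‖ ≤ C_f * δ →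
        ∀ (γδ βδ : ℕ → ℝ) (vδ : ℕ → H₂) (pδ : ℕ → H₁),
          GKB K fδ γδ βδ vδ pδ →
          ∀ k : ℕ,
            |γδ k - γ k| + ‖vδ k - v k‖ + |βδ k - β k| + ‖pδ k - p k‖ ≤
              C₄ * (Nat.factorial (k + 1)) * δ :=
  stmt_14_general K f C_f C₃ θ hCf hC₃ hθ γ β v p hGKB hlow
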